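/- Let n ≥ 2 and let f : ℂ → SL_n(ℂ) be an algebraic embedding whose first-column projection satisfies π₁(f(t)) = (1, 0, ..., 0, t)ᵀ for all t ∈ ℂ. Then there is an algebraic automorphism ψ of SL_n(ℂ) such that ψ(f(t)) = E_{n1}(t) for all t, where E_{n1}(t) is the elementary matrix with lower-left entry t. Concretely, ψ(X) = X · f(x_{n1})⁻¹ · E_{n1}(x_{n1}) works, where x_{n1} is the (n,1)-entry of X. -/

import Mathlib

/-! Write `x X` for the `(n,1)`-entry of `X`. Right multiplication by a matrix whose first column
is `e₁` fixes the first column, hence fixes `x`. As `f t` and `E_{n1}(t)` share their first column,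
`(f t)⁻¹ E_{n1}(t)` is such a matrix, so `ψ X = X (f (x X))⁻¹ E_{n1}(x X)` satisfies `x ∘ ψ = x`,
and `X ↦ X E_{n1}(x X)⁻¹ f (x X)` is inverse to it. Both maps have the form `X ↦ X N(x X)` for a
matrix `N` of polynomials (`(f t)⁻¹` is the adjugate of `f t`), so both are regular. -/

open Matrix

noncomputable section

abbrev SL (n : ℕ) := Matrix.SpecialLinearGroup (Fin n) ℂ

/-- A self-map of `SL n ℂ` is regular (algebraic) if each matrix entry of the image is
given by a polynomial in the matrix entries of the argument. -/
def SLRegular {n : ℕ} (φ : SL n → SL n) : Prop :=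
  ∀ i j : Fin n, ∃ P : MvPolynomial (Fin n × Fin n) ℂ,
    ∀ X : SL n, (φ X : Matrix (Fin n) (Fin n) ℂ) i j =
      MvPolynomial.eval (fun kl => (X : Matrix (Fin n) (Fin n) ℂ) kl.1 kl.2) P

/-- An algebraic automorphism of `SL n ℂ`: a regular map with a regular inverse. -/
def SLAlgAut {n : ℕ} (φ : SL n → SL n) : Prop :=
  SLRegular φ ∧ ∃ ψ : SL n → SL n, SLRegular ψ ∧
    Function.LeftInverse ψ φ ∧ Function.RightInverse ψ φ

open Polynomial in
def IsPolynomialCurve {ι R : Type*} [CommSemiring R] (c : R → Matrix ι ι R) : Prop :=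
  ∃ M : Matrix ι ι R[X], ∀ t, c t = M.map (eval t)

namespace IsPolynomialCurve

open Polynomial

lemma transvection {ι R : Type*} [DecidableEq ι] [CommRing R] (i j : ι) :
    IsPolynomialCurve (fun t : R => Matrix.transvection i j t) := by
  refine ⟨Matrix.transvection i j X, fun t => ?_⟩
  rw [← coe_evalRingHom, Matrix.transvection, Matrix.map_add _ (map_add _), Matrix.map_single]
  simp [Matrix.transvection]

variable {ι R : Type*} [Fintype ι] [CommRing R] {c d : R → Matrix ι ι R}

lemma mul (hc : IsPolynomialCurve c) (hd : IsPolynomialCurve d) :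
    IsPolynomialCurve (fun t => c t * d t) := by
  obtain ⟨M, hM⟩ := hc
  obtain ⟨N, hN⟩ := hd
  exact ⟨M * N, fun t => by dsimp only; rw [hM, hN, ← coe_evalRingHom, Matrix.map_mul]⟩

lemma adjugate [DecidableEq ι] (hc : IsPolynomialCurve c) :
    IsPolynomialCurve (fun t => (c t).adjugate) := by
  obtain ⟨M, hM⟩ := hc
  refine ⟨M.adjugate, fun t => ?_⟩
  dsimp only
  rw [hM, ← coe_evalRingHom, ← RingHom.mapMatrix_apply, ← RingHom.map_adjugate]
  rfl

end IsPolynomialCurve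

lemma MvPolynomial.eval_aeval_X {σ R : Type*} [CommRing R] (g : σ → R) (s : σ)
    (p : Polynomial R) :
    MvPolynomial.eval g (Polynomial.aeval (MvPolynomial.X s) p) = p.eval (g s) := by
  change MvPolynomial.aeval g _ = _
  rw [← Polynomial.aeval_algHom_apply, MvPolynomial.aeval_X, Polynomial.coe_aeval_eq_eval]

lemma slRegular_of_eq_mul {n : ℕ} {c : ℂ → Matrix (Fin n) (Fin n) ℂ} (hc : IsPolynomialCurve c)
    (a b : Fin n) {φ : SL n → SL n}
    (hφ : ∀ X : SL n, (φ X : Matrix (Fin n) (Fin n) ℂ) =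
      (X : Matrix (Fin n) (Fin n) ℂ) * c ((X : Matrix (Fin n) (Fin n) ℂ) a b)) :
    SLRegular φ := by
  obtain ⟨M, hM⟩ := hc
  intro i j
  refine ⟨∑ k, MvPolynomial.X (i, k) * Polynomial.aeval (MvPolynomial.X (a, b)) (M k j),
    fun X => ?_⟩
  simp only [hφ, hM, Matrix.mul_apply, Matrix.map_apply, map_sum, map_mul, MvPolynomial.eval_X,
    MvPolynomial.eval_aeval_X]

section RightTwist

variable {G α : Type*} [Group G] (x : G → α) (a b : α → G)

def rightTwist (X : G) : G := X * (a (x X))⁻¹ * b (x X)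

lemma rightTwist_leftInverse (hx : ∀ X t, x (X * (a t)⁻¹ * b t) = x X) :
    Function.LeftInverse (rightTwist x b a) (rightTwist x a b) := by
  intro X
  simp only [rightTwist, hx]
  group

end RightTwist

namespace Matrix

lemma transvection_apply_col_eq {ι R : Type*} [DecidableEq ι] [CommRing R] {A : Matrix ι ι R}
    {i j : ι} (hij : i ≠ j) {c : R} (hjj : A j j = 1) (hic : A i j = c)
    (hk : ∀ k, k ≠ j → k ≠ i → A k j = 0) (k : ι) :
    A k j = transvection i j c k j := by
  by_cases hkj : k = j
  · subst hkj
    simp [transvection, hjj, hij]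
  by_cases hki : k = i
  · subst hki
    simp [transvection, hic, hkj]
  · simp [transvection, hk k hkj hki, hkj, Ne.symm hki]

variable {ι R : Type*} [Fintype ι] [DecidableEq ι] [CommRing R]

lemma mul_apply_of_col_eq_one {X g : Matrix ι ι R} {j : ι}
    (hg : ∀ k, g k j = (1 : Matrix ι ι R) k j) (i : ι) : (X * g) i j = X i j := by
  rw [mul_apply, Finset.sum_congr rfl fun k _ => by rw [hg k], ← mul_apply, mul_one]

lemma SpecialLinearGroup.inv_mul_apply_of_col_eq {A B : SpecialLinearGroup ι R} {j : ι}
    (h : ∀ k, (A : Matrix ι ι R) k j = (B : Matrix ι ι R) k j) (k : ι) :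
    ((A⁻¹ * B : SpecialLinearGroup ι R) : Matrix ι ι R) k j = (1 : Matrix ι ι R) k j := by
  rw [coe_mul, mul_apply, Finset.sum_congr rfl fun l _ => by rw [← h l], ← mul_apply, ← coe_mul,
    inv_mul_cancel, coe_one]

lemma SpecialLinearGroup.mul_inv_mul_apply_of_col_eq {A B : SpecialLinearGroup ι R} {j : ι}
    (h : ∀ k, (A : Matrix ι ι R) k j = (B : Matrix ι ι R) k j) (X : SpecialLinearGroup ι R)
    (i : ι) : ((X * A⁻¹ * B : SpecialLinearGroup ι R) : Matrix ι ι R) i j = X i j := by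
  rw [mul_assoc, coe_mul, mul_apply_of_col_eq_one (inv_mul_apply_of_col_eq h)]

end Matrix

section SL

variable {n : ℕ} (i j : Fin n) {a b : ℂ → SL n}

lemma slRegular_rightTwist (ha : IsPolynomialCurve fun t => (a t : Matrix (Fin n) (Fin n) ℂ))
    (hb : IsPolynomialCurve fun t => (b t : Matrix (Fin n) (Fin n) ℂ)) :
    SLRegular (rightTwist (fun X : SL n => (X : Matrix (Fin n) (Fin n) ℂ) i j) a b) :=
  slRegular_of_eq_mul (ha.adjugate.mul hb) i j fun X => by simp [rightTwist, mul_assoc]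

lemma slAlgAut_rightTwist (ha : IsPolynomialCurve fun t => (a t : Matrix (Fin n) (Fin n) ℂ))
    (hb : IsPolynomialCurve fun t => (b t : Matrix (Fin n) (Fin n) ℂ))
    (hcol : ∀ t k, (a t : Matrix (Fin n) (Fin n) ℂ) k j = (b t : Matrix (Fin n) (Fin n) ℂ) k j) :
    SLAlgAut (rightTwist (fun X : SL n => (X : Matrix (Fin n) (Fin n) ℂ) i j) a b) :=
  ⟨slRegular_rightTwist i j ha hb, _, slRegular_rightTwist i j hb ha,
    rightTwist_leftInverse _ a b fun X t =>
      SpecialLinearGroup.mul_inv_mul_apply_of_col_eq (hcol t) X i,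
    rightTwist_leftInverse _ b a fun X t =>
      SpecialLinearGroup.mul_inv_mul_apply_of_col_eq (fun k => (hcol t k).symm) X i⟩

end SL

theorem stmt_8 (n : ℕ) (hn : 2 ≤ n) (f : ℂ → SL n)
    (P : Fin n → Fin n → Polynomial ℂ)
    (hP : ∀ (t : ℂ) (i j : Fin n), (f t : Matrix (Fin n) (Fin n) ℂ) i j = (P i j).eval t)
    (hcol1 : ∀ t : ℂ, (f t : Matrix (Fin n) (Fin n) ℂ) ⟨0, by omega⟩ ⟨0, by omega⟩ = 1)
    (hcoln : ∀ t : ℂ, (f t : Matrix (Fin n) (Fin n) ℂ) ⟨n - 1, by omega⟩ ⟨0, by omega⟩ = t)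
    (hcol0 : ∀ (t : ℂ) (i : Fin n), (i : ℕ) ≠ 0 → (i : ℕ) ≠ n - 1 →
      (f t : Matrix (Fin n) (Fin n) ℂ) i ⟨0, by omega⟩ = 0) :
    ∃ ψ : SL n → SL n, SLAlgAut ψ ∧
      (∀ X : SL n, (ψ X : Matrix (Fin n) (Fin n) ℂ) =
        (X : Matrix (Fin n) (Fin n) ℂ) *
          (((f ((X : Matrix (Fin n) (Fin n) ℂ) ⟨n - 1, by omega⟩ ⟨0, by omega⟩))⁻¹ :
              SL n) : Matrix (Fin n) (Fin n) ℂ) *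
          ((1 : Matrix (Fin n) (Fin n) ℂ) +
            Matrix.single ⟨n - 1, by omega⟩ ⟨0, by omega⟩
              ((X : Matrix (Fin n) (Fin n) ℂ) ⟨n - 1, by omega⟩ ⟨0, by omega⟩))) ∧
      ∀ t : ℂ, (ψ (f t) : Matrix (Fin n) (Fin n) ℂ) =
        (1 : Matrix (Fin n) (Fin n) ℂ) +
          Matrix.single ⟨n - 1, by omega⟩ ⟨0, by omega⟩ t := by
  set i₀ : Fin n := ⟨0, by omega⟩
  set iₙ : Fin n := ⟨n - 1, by omega⟩
  have hne : iₙ ≠ i₀ := Fin.ne_of_val_ne (by simp [iₙ, i₀]; omega)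
  let E : ℂ → SL n := fun t => ⟨transvection iₙ i₀ t, det_transvection_of_ne iₙ i₀ hne t⟩
  have hf : IsPolynomialCurve fun t => (f t : Matrix (Fin n) (Fin n) ℂ) :=
    ⟨Matrix.of P, fun t => by ext i j; exact hP t i j⟩
  have hcol : ∀ t k,
      (f t : Matrix (Fin n) (Fin n) ℂ) k i₀ = (E t : Matrix (Fin n) (Fin n) ℂ) k i₀ :=
    fun t => transvection_apply_col_eq hne (hcol1 t) (hcoln t) fun k hk0 hkn =>
      hcol0 t k (Fin.val_ne_iff.2 hk0) (Fin.val_ne_iff.2 hkn)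
  refine ⟨rightTwist (fun X : SL n => (X : Matrix (Fin n) (Fin n) ℂ) iₙ i₀) f E,
    slAlgAut_rightTwist iₙ i₀ hf (IsPolynomialCurve.transvection iₙ i₀) hcol, fun X => rfl,
    fun t => ?_⟩
  simp only [rightTwist, hcoln, mul_inv_cancel, one_mul]
  rfl
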